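/- arXiv:1512.01383 — 8 statements merged into one kernel-verified Lean document; each statement's English description precedes it below -/
import Mathlib

section
/- Let k ≥ 1, let γ_1 < γ_2 < … < γ_{k+1} be real labels, and let ρ : ℝ → ℝ. For every index 1 ≤ i ≤ k and every v ∈ ℝ^k, the convex conjugate of the lifted piece ρ_i satisfies ρ_i^*(v) = ⟨1_{i−1}, v⟩ − (γ_i/(γ_{i+1} − γ_i))·v_i + (ρ + δ_{[γ_i, γ_{i+1}]})^*( v_i/(γ_{i+1} − γ_i) ), where (ρ + δ_{[γ_i,γ_{i+1}]})^* is the convex conjugate of the scalar function that equals ρ on [γ_i, γ_{i+1}] and +∞ elsewhere. -/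
/-- Dot product (inner product) on ℝ^k. -/
noncomputable def dotk {k : ℕ} (v u : Fin k → ℝ) : ℝ := ∑ j, v j * u j

/-- Convex conjugate of an extended-real-valued function on ℝ^k:
`f^*(v) = sup_u ⟨v,u⟩ - f(u)`. -/
noncomputable def conjV {k : ℕ} (f : (Fin k → ℝ) → EReal) (v : Fin k → ℝ) : EReal :=
  ⨆ u : Fin k → ℝ, (dotk v u : EReal) - f u

/-- The vector `1_i` : first `i` entries 1, remaining entries 0 (so `onevec k 0 = 0`). -/
noncomputable def onevec (k : ℕ) (i : ℕ) : Fin k → ℝ := fun j => if (j : ℕ) < i then 1 else 0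

/-- `1_i^α` (with 0-based interval index `i`): first `i` entries 1, entry `i` equals `α`,
remaining entries 0.  This is `α • 1_{i+1} + (1-α) • 1_i` in the 0-based numbering of `onevec`. -/
noncomputable def liftvec {k : ℕ} (i : Fin k) (α : ℝ) : Fin k → ℝ :=
  fun j => if (j : ℕ) < (i : ℕ) then 1 else if j = i then α else 0

/-- `γ_i^α = γ_i + α (γ_{i+1} - γ_i)`, with 0-based interval index `i`. -/
noncomputable def gammaAff {k : ℕ} (γ : Fin (k+1) → ℝ) (i : Fin k) (α : ℝ) : ℝ :=
  γ i.castSucc + α * (γ i.succ - γ i.castSucc)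

/-- The lifted piece `ρ_i` : equals `ρ(γ_i^α)` if `u = 1_i^α` for some `α ∈ [0,1]`,
and `+∞` otherwise (the set below is a singleton or empty, and `sInf ∅ = ⊤` in `EReal`). -/
noncomputable def rhoPiece {k : ℕ} (γ : Fin (k+1) → ℝ) (ρ : ℝ → ℝ) (i : Fin k)
    (u : Fin k → ℝ) : EReal :=
  sInf {c : EReal | ∃ α ∈ Set.Icc (0:ℝ) 1, u = liftvec i α ∧ c = (ρ (gammaAff γ i α) : EReal)}

/-- Scalar convex conjugate: `f^*(v) = sup_u (v·u - f(u))`. -/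
noncomputable def conj1 (f : ℝ → EReal) (v : ℝ) : EReal :=
  ⨆ u : ℝ, ((v * u : ℝ) : EReal) - f u

/-- `ρ + δ_{[a,b]}` : equals `ρ` on `[a,b]` and `+∞` elsewhere. -/
noncomputable def rhoRestr (ρ : ℝ → ℝ) (a b : ℝ) : ℝ → EReal :=
  fun t => if t ∈ Set.Icc a b then (ρ t : EReal) else ⊤

/-!
`ρ_i` is finite only on the segment `α ↦ 1_i^α`, `α ∈ [0,1]`, so the supremum defining `ρ_i^*(v)`
runs over that segment. Along it `⟨v, 1_i^α⟩ = ⟨1_{i-1}, v⟩ + α v_i` is affine in `α`, and the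
substitution `t = γ_i^α`, an affine bijection of `ℝ` mapping `[0,1]` onto `[γ_i, γ_{i+1}]`, turns
the supremum into a real constant plus the scalar conjugate of `ρ + δ_{[γ_i, γ_{i+1}]}`.
-/

theorem iSup_eq_iSup_comp_of_eq_bot {α ι κ : Type*} [CompleteLattice α] (φ : κ → ι) (f : ι → α)
    (hf : ∀ u ∉ Set.range φ, f u = ⊥) : ⨆ u, f u = ⨆ t, f (φ t) := by
  refine le_antisymm (iSup_le fun u => ?_) (iSup_comp_le f φ)
  by_cases hu : u ∈ Set.range φ
  · obtain ⟨t, rfl⟩ := hu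
    exact le_iSup (f ∘ φ) t
  · simp [hf u hu]

namespace EReal

theorem coe_add_iSup {ι : Sort*} (c : ℝ) (f : ι → EReal) :
    (c : EReal) + ⨆ i, f i = ⨆ i, (c : EReal) + f i :=
  have cancel : ∀ a b : ℝ, a + b = 0 → ∀ x : EReal, (a : EReal) + (b + x) = x := fun a b h x => by
    rw [← add_assoc, ← coe_add, h, coe_zero, zero_add]
  let shift : EReal ≃o EReal :=
    Equiv.toOrderIso ⟨(c + ·), ((-c : ℝ) + ·), cancel _ _ (neg_add_cancel c),
      cancel _ _ (add_neg_cancel c)⟩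
      (fun _ _ h => add_le_add_right h (c : EReal))
      (fun _ _ h => add_le_add_right h ((-c : ℝ) : EReal))
  shift.map_iSup f

theorem coe_add_sub (c y : ℝ) (x : EReal) : ((c + y : ℝ) : EReal) - x = c + (y - x) := by
  rw [coe_add, sub_eq_add_neg, sub_eq_add_neg, add_assoc]

end EReal

section LiftedPiece

variable {k : ℕ}

theorem liftvec_injective (i : Fin k) : Function.Injective (liftvec i) := fun α β h => by
  simpa [liftvec] using congrFun h i

theorem dotk_liftvec (v : Fin k → ℝ) (i : Fin k) (α : ℝ) :
    dotk v (liftvec i α) = dotk (onevec k i) v + α * v i := by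
  have hj : ∀ j : Fin k,
      v j * liftvec i α j = onevec k i j * v j + if j = i then α * v j else 0 := by
    intro j
    rcases lt_trichotomy (j : ℕ) i with h | h | h
    · simp [liftvec, onevec, h, Fin.ne_of_lt h]
    · simp [liftvec, onevec, Fin.ext h, mul_comm]
    · simp [liftvec, onevec, h.not_gt, (Fin.ne_of_lt h).symm]
  simp only [dotk, hj, Finset.sum_add_distrib, Finset.sum_ite_eq', Finset.mem_univ, if_true]

variable (γ : Fin (k + 1) → ℝ) (ρ : ℝ → ℝ) {i : Fin k}

theorem gammaAff_surjective (h : γ i.castSucc < γ i.succ) : Function.Surjective (gammaAff γ i) :=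
  fun t => ⟨(t - γ i.castSucc) / (γ i.succ - γ i.castSucc), by
    simp only [gammaAff]; field_simp [(sub_pos.2 h).ne']; ring⟩

theorem gammaAff_mem_Icc_iff (h : γ i.castSucc < γ i.succ) {α : ℝ} :
    gammaAff γ i α ∈ Set.Icc (γ i.castSucc) (γ i.succ) ↔ α ∈ Set.Icc 0 1 := by
  have hpos := sub_pos.2 h
  simp only [gammaAff, Set.mem_Icc, le_add_iff_nonneg_right]
  constructor
  · rintro ⟨h0, h1⟩
    exact ⟨nonneg_of_mul_nonneg_left h0 hpos, by nlinarith⟩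
  · rintro ⟨h0, h1⟩
    exact ⟨by positivity, by nlinarith⟩

theorem rhoPiece_of_notMem_range {u : Fin k → ℝ} (hu : u ∉ Set.range (liftvec i)) :
    rhoPiece γ ρ i u = ⊤ :=
  sInf_eq_top.2 fun _ ⟨α, _, hα, _⟩ => absurd ⟨α, hα.symm⟩ hu

theorem rhoPiece_liftvec (h : γ i.castSucc < γ i.succ) (α : ℝ) :
    rhoPiece γ ρ i (liftvec i α) = rhoRestr ρ (γ i.castSucc) (γ i.succ) (gammaAff γ i α) := by
  simp only [rhoPiece, rhoRestr, gammaAff_mem_Icc_iff γ h, (liftvec_injective i).eq_iff]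
  split_ifs with hα
  · simp [hα]
  · exact sInf_eq_top.2 fun _ ⟨β, hβ, hαβ, _⟩ => absurd (hαβ ▸ hβ) hα

end LiftedPiece

/-- The interval index `i : Fin k` is 0-based, so the paper's `1_{i-1}` is `onevec k i`. -/
theorem conj_rhoPiece_eq_general {k : ℕ} (γ : Fin (k+1) → ℝ) (hγ : StrictMono γ)
    (ρ : ℝ → ℝ) (i : Fin k) (v : Fin k → ℝ) :
    conjV (rhoPiece γ ρ i) v
      = ((dotk (onevec k (i : ℕ)) v
            - (γ i.castSucc / (γ i.succ - γ i.castSucc)) * v i : ℝ) : EReal)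
        + conj1 (rhoRestr ρ (γ i.castSucc) (γ i.succ)) (v i / (γ i.succ - γ i.castSucc)) := by
  have hlt : γ i.castSucc < γ i.succ := hγ Fin.castSucc_lt_succ
  have off_line : ∀ u ∉ Set.range (liftvec i), (dotk v u : EReal) - rhoPiece γ ρ i u = ⊥ :=
    fun u hu => by rw [rhoPiece_of_notMem_range γ ρ hu, EReal.sub_top]
  rw [conjV, iSup_eq_iSup_comp_of_eq_bot _ _ off_line, conj1, EReal.coe_add_iSup]
  conv_rhs => rw [← (gammaAff_surjective γ hlt).iSup_comp]
  refine iSup_congr fun α => ?_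
  rw [rhoPiece_liftvec γ ρ hlt, ← EReal.coe_add_sub, dotk_liftvec]
  congr 2
  simp only [gammaAff]
  field_simp [(sub_pos.2 hlt).ne']
  ring

/-- Proposition 1, conjugate formula. For labels `γ_1 < … < γ_{k+1}`,
`ρ : ℝ → ℝ`, every interval index `i` and every `v ∈ ℝ^k`:
`ρ_i^*(v) = ⟨1_{i-1}, v⟩ - (γ_i/(γ_{i+1}-γ_i))·v_i + (ρ + δ_{[γ_i,γ_{i+1}]})^*(v_i/(γ_{i+1}-γ_i))`.
(Here `i : Fin k` is the 0-based interval index, so the paper's `1_{i-1}` is `onevec k i`.) -/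
theorem conj_rhoPiece_eq {k : ℕ} (hk : 1 ≤ k) (γ : Fin (k+1) → ℝ) (hγ : StrictMono γ)
    (ρ : ℝ → ℝ) (i : Fin k) (v : Fin k → ℝ) :
    conjV (rhoPiece γ ρ i) v
      = ((dotk (onevec k (i : ℕ)) v
            - (γ i.castSucc / (γ i.succ - γ i.castSucc)) * v i : ℝ) : EReal)
        + conj1 (rhoRestr ρ (γ i.castSucc) (γ i.succ)) (v i / (γ i.succ - γ i.castSucc)) :=
  conj_rhoPiece_eq_general γ hγ ρ i v
end

section
/- Let k ≥ 1, let γ_1 < γ_2 < … < γ_{k+1} be real labels, let ρ : ℝ → ℝ, and let r ∈ ℝ^k be the vector with entries r_i = ρ(γ_{i+1}) − ρ(γ_i) for 1 ≤ i ≤ k. Then the convex biconjugate of the label-restricted function σ satisfies: σ^{**}(u) = ρ(γ_1) + ⟨u, r⟩ whenever 1 ≥ u_1 ≥ u_2 ≥ … ≥ u_k ≥ 0, and σ^{**}(u) = +∞ for every other u ∈ ℝ^k. -/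
/-- The label-restricted function `σ` : equals `ρ(γ_{i+1})` at `1_i` for `0 ≤ i ≤ k`
(here `γ` is 0-indexed, so `σ(onevec k i) = ρ(γ i)` for `i : Fin (k+1)`),
and `+∞` at every other point. -/
noncomputable def sigmaF {k : ℕ} (γ : Fin (k+1) → ℝ) (ρ : ℝ → ℝ) (u : Fin k → ℝ) : EReal :=
  sInf {c : EReal | ∃ i : Fin (k+1), u = onevec k (i : ℕ) ∧ c = (ρ (γ i) : EReal)}

namespace BiconjAux

/-- extension of a vector to ℕ by zero -/
noncomputable def vext {k : ℕ} (v : Fin k → ℝ) : ℕ → ℝ := fun j => if h : j < k then v ⟨j, h⟩ else 0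

lemma vext_coe {k : ℕ} (v : Fin k → ℝ) (j : Fin k) : vext v (j : ℕ) = v j := by
  simp [vext, j.isLt]

lemma dotk_comm {k : ℕ} (v u : Fin k → ℝ) : dotk v u = dotk u v := by
  simp [dotk, mul_comm]

lemma dotk_eq_range {k : ℕ} (v u : Fin k → ℝ) :
    dotk v u = ∑ j ∈ Finset.range k, vext v j * vext u j := by
  rw [dotk, ← Fin.sum_univ_eq_sum_range (fun j => vext v j * vext u j) k]
  exact Finset.sum_congr rfl fun j _ => by rw [vext_coe, vext_coe]

lemma dot_onevec {k : ℕ} (v : Fin k → ℝ) (i : ℕ) (hi : i ≤ k) :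
    dotk v (onevec k i) = ∑ j ∈ Finset.range i, vext v j := by
  have h1 : dotk v (onevec k i) = ∑ j ∈ Finset.range k, vext v j * (if j < i then 1 else 0) := by
    rw [dotk, ← Fin.sum_univ_eq_sum_range (fun j => vext v j * (if j < i then 1 else 0)) k]
    exact Finset.sum_congr rfl fun j _ => by rw [vext_coe]; rfl
  rw [h1]
  rw [← Finset.sum_subset (Finset.range_subset_range.mpr hi)
      (fun x _ hnx => by
        rw [Finset.mem_range, not_lt] at hnx
        rw [if_neg (by omega), mul_zero])]
  exact Finset.sum_congr rfl fun j hj => by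
    rw [Finset.mem_range] at hj; rw [if_pos hj, mul_one]

lemma onevec_inj_aux {k : ℕ} {i j : ℕ} (hij : i < j) (hj : j ≤ k) :
    onevec k i ≠ onevec k j := by
  intro h
  have hik : i < k := lt_of_lt_of_le hij hj
  have := congrFun h ⟨i, hik⟩
  simp only [onevec] at this
  rw [if_neg (by omega), if_pos (by omega)] at this
  norm_num at this

lemma onevec_inj {k : ℕ} {i j : Fin (k+1)} (h : onevec k (i:ℕ) = onevec k (j:ℕ)) : i = j := by
  rcases lt_trichotomy (i:ℕ) (j:ℕ) with hl | he | hg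
  · exact absurd h (onevec_inj_aux hl (by omega))
  · exact Fin.ext he
  · exact absurd h.symm (onevec_inj_aux hg (by omega))

lemma sigmaF_onevec {k : ℕ} (γ : Fin (k+1) → ℝ) (ρ : ℝ → ℝ) (i : Fin (k+1)) :
    sigmaF γ ρ (onevec k (i:ℕ)) = ((ρ (γ i) : ℝ) : EReal) := by
  unfold sigmaF
  have : {c : EReal | ∃ j : Fin (k+1), onevec k (i:ℕ) = onevec k (j : ℕ) ∧ c = (ρ (γ j) : EReal)}
      = {((ρ (γ i) : ℝ) : EReal)} := by
    ext c
    constructor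
    · rintro ⟨j, hje, rfl⟩
      have := onevec_inj hje
      simp [this]
    · rintro rfl
      exact ⟨i, rfl, rfl⟩
  rw [this, csInf_singleton]

lemma sigmaF_not {k : ℕ} (γ : Fin (k+1) → ℝ) (ρ : ℝ → ℝ) (u : Fin k → ℝ)
    (h : ∀ i : Fin (k+1), u ≠ onevec k (i:ℕ)) : sigmaF γ ρ u = ⊤ := by
  unfold sigmaF
  have : {c : EReal | ∃ i : Fin (k+1), u = onevec k (i : ℕ) ∧ c = (ρ (γ i) : EReal)} = ∅ := by
    ext c; simp only [Set.mem_setOf_eq, Set.mem_empty_iff_false, iff_false]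
    rintro ⟨i, hi, -⟩; exact h i hi
  rw [this, sInf_empty]

/-- the conjugate value as a real number -/
noncomputable def Mv {k : ℕ} (γ : Fin (k+1) → ℝ) (ρ : ℝ → ℝ) (v : Fin k → ℝ) : ℝ :=
  Finset.univ.sup' Finset.univ_nonempty
    (fun i : Fin (k+1) => dotk v (onevec k (i:ℕ)) - ρ (γ i))

lemma conj_sigma {k : ℕ} (γ : Fin (k+1) → ℝ) (ρ : ℝ → ℝ) (v : Fin k → ℝ) :
    conjV (sigmaF γ ρ) v = ((Mv γ ρ v : ℝ) : EReal) := by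
  apply le_antisymm
  · apply iSup_le
    intro u
    by_cases h : ∃ i : Fin (k+1), u = onevec k (i:ℕ)
    · obtain ⟨i, rfl⟩ := h
      rw [sigmaF_onevec, ← EReal.coe_sub, EReal.coe_le_coe_iff]
      exact Finset.le_sup' (fun i : Fin (k+1) => dotk v (onevec k (i:ℕ)) - ρ (γ i))
        (Finset.mem_univ i)
    · push_neg at h
      rw [sigmaF_not γ ρ u h, EReal.sub_top]
      exact bot_le
  · obtain ⟨i, -, hi⟩ := Finset.exists_mem_eq_sup' (Finset.univ_nonempty)
      (fun i : Fin (k+1) => dotk v (onevec k (i:ℕ)) - ρ (γ i))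
    rw [Mv, hi, EReal.coe_sub]
    have := le_iSup (fun u : Fin k → ℝ => (dotk v u : EReal) - sigmaF γ ρ u) (onevec k (i:ℕ))
    rw [sigmaF_onevec] at this
    exact this

lemma biconj_eq {k : ℕ} (γ : Fin (k+1) → ℝ) (ρ : ℝ → ℝ) (u : Fin k → ℝ) :
    conjV (conjV (sigmaF γ ρ)) u = ⨆ v : Fin k → ℝ, ((dotk u v - Mv γ ρ v : ℝ) : EReal) := by
  unfold conjV
  apply iSup_congr
  intro v
  rw [show (⨆ u : Fin k → ℝ, (dotk v u : EReal) - sigmaF γ ρ u) = conjV (sigmaF γ ρ) v from rfl,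
    conj_sigma, ← EReal.coe_sub]

/-- extension of `ρ ∘ γ` to ℕ -/
noncomputable def qγ {k : ℕ} (γ : Fin (k+1) → ℝ) (ρ : ℝ → ℝ) : ℕ → ℝ :=
  fun i => if h : i < k+1 then ρ (γ ⟨i, h⟩) else 0

lemma qγ_coe {k : ℕ} (γ : Fin (k+1) → ℝ) (ρ : ℝ → ℝ) (i : Fin (k+1)) :
    qγ γ ρ (i : ℕ) = ρ (γ i) := by simp [qγ, i.isLt]

/-- the slope vector r -/
noncomputable def rvec {k : ℕ} (γ : Fin (k+1) → ℝ) (ρ : ℝ → ℝ) : Fin k → ℝ :=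
  fun i => ρ (γ i.succ) - ρ (γ i.castSucc)

lemma vext_rvec {k : ℕ} (γ : Fin (k+1) → ℝ) (ρ : ℝ → ℝ) {j : ℕ} (hj : j < k) :
    vext (rvec γ ρ) j = qγ γ ρ (j+1) - qγ γ ρ j := by
  simp only [vext, rvec, dif_pos hj, qγ, dif_pos (by omega : j + 1 < k + 1),
    dif_pos (by omega : j < k + 1)]
  congr 2

lemma dot_rvec_onevec {k : ℕ} (γ : Fin (k+1) → ℝ) (ρ : ℝ → ℝ) {i : ℕ} (hi : i ≤ k) :
    dotk (rvec γ ρ) (onevec k i) = qγ γ ρ i - qγ γ ρ 0 := by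
  rw [dot_onevec _ _ hi]
  rw [Finset.sum_congr rfl (fun j hj => vext_rvec γ ρ
    (lt_of_lt_of_le (Finset.mem_range.mp hj) hi))]
  exact Finset.sum_range_sub (qγ γ ρ) i

lemma Mv_rvec {k : ℕ} (γ : Fin (k+1) → ℝ) (ρ : ℝ → ℝ) :
    Mv γ ρ (rvec γ ρ) = - qγ γ ρ 0 := by
  unfold Mv
  apply le_antisymm
  · apply Finset.sup'_le
    intro i _
    rw [dot_rvec_onevec γ ρ (by omega : (i:ℕ) ≤ k), qγ_coe]
    linarith
  · have h0 : qγ γ ρ (((0:Fin (k+1)):ℕ)) = ρ (γ 0) := qγ_coe γ ρ 0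
    have := Finset.le_sup' (fun i : Fin (k+1) => dotk (rvec γ ρ) (onevec k (i:ℕ)) - ρ (γ i))
      (Finset.mem_univ (0 : Fin (k+1)))
    simp only [dot_rvec_onevec γ ρ (by simp : ((0:Fin (k+1)):ℕ) ≤ k)] at this
    simp only [Fin.val_zero] at this h0
    linarith

lemma dotk_add_smul {k : ℕ} (a w x : Fin k → ℝ) (t : ℝ) :
    dotk (fun j => a j + t * w j) x = dotk a x + t * dotk w x := by
  simp only [dotk, add_mul, Finset.sum_add_distrib, Finset.mul_sum]
  congr 1
  exact Finset.sum_congr rfl fun j _ => by ring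

lemma abel_sum (p s : ℕ → ℝ) (n : ℕ) :
    ∑ i ∈ Finset.range n, (p i - p (i+1)) * s i
      = p 0 * s 0 - p n * s n + ∑ i ∈ Finset.range n, p (i+1) * (s (i+1) - s i) := by
  have h := Finset.sum_range_sub' (fun i => p i * s i) n
  have h2 : ∑ i ∈ Finset.range n, ((p i - p (i+1)) * s i - p (i+1) * (s (i+1) - s i))
      = ∑ i ∈ Finset.range n, (p i * s i - p (i+1) * s (i+1)) :=
    Finset.sum_congr rfl (fun i _ => by ring)
  rw [Finset.sum_sub_distrib, Finset.sum_sub_distrib] at h2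
  rw [Finset.sum_sub_distrib] at h
  linarith

end BiconjAux

namespace BiconjAux

lemma ereal_eq_top {a : EReal} (h : ∀ x : ℝ, (x:EReal) ≤ a) : a = ⊤ := by
  induction a using EReal.rec with
  | bot => simpa using h 0
  | coe r =>
    have := h (r+1)
    rw [EReal.coe_le_coe_iff] at this
    linarith
  | top => rfl

/-- general lower bound for the biconjugate -/
lemma biconj_ge {k : ℕ} (γ : Fin (k+1) → ℝ) (ρ : ℝ → ℝ) (u : Fin k → ℝ) :
    ((ρ (γ 0) + dotk u (rvec γ ρ) : ℝ) : EReal) ≤ conjV (conjV (sigmaF γ ρ)) u := by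
  rw [biconj_eq]
  refine le_iSup_of_le (rvec γ ρ) ?_
  rw [EReal.coe_le_coe_iff, Mv_rvec]
  have h0 : qγ γ ρ (((0:Fin (k+1)):ℕ)) = ρ (γ 0) := qγ_coe γ ρ 0
  simp only [Fin.val_zero] at h0
  linarith

/-- if a direction `w` separates `u` from all `onevec`s, the biconjugate is `⊤` -/
lemma biconj_top {k : ℕ} (γ : Fin (k+1) → ℝ) (ρ : ℝ → ℝ) (u : Fin k → ℝ)
    (w : Fin k → ℝ) (c : ℝ)
    (hw : ∀ i : Fin (k+1), dotk w (onevec k (i:ℕ)) ≤ c) (hu : c < dotk u w) :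
    conjV (conjV (sigmaF γ ρ)) u = ⊤ := by
  apply ereal_eq_top
  intro x
  rw [biconj_eq]
  set L : ℝ := ρ (γ 0) + dotk u (rvec γ ρ) with hL
  set t : ℝ := max 0 ((x - L) / (dotk u w - c)) with ht
  have ht0 : 0 ≤ t := le_max_left _ _
  have hgap : 0 < dotk u w - c := by linarith
  have hxt : x ≤ L + t * (dotk u w - c) := by
    have h1 : (x - L) / (dotk u w - c) ≤ t := le_max_right _ _
    have := (div_le_iff₀ hgap).mp h1
    linarith
  set v : Fin k → ℝ := fun j => rvec γ ρ j + t * w j with hv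
  refine le_trans ?_ (le_iSup _ v)
  rw [EReal.coe_le_coe_iff]
  have hM : Mv γ ρ v ≤ - qγ γ ρ 0 + t * c := by
    apply Finset.sup'_le
    intro i _
    rw [hv, dotk_add_smul, dot_rvec_onevec γ ρ (by omega : (i:ℕ) ≤ k), qγ_coe]
    have := mul_le_mul_of_nonneg_left (hw i) ht0
    linarith
  have hdot : dotk u v = dotk u (rvec γ ρ) + t * dotk u w := by
    rw [dotk_comm u v, hv, dotk_add_smul, dotk_comm _ u, dotk_comm w u]
  have h0 : qγ γ ρ (((0:Fin (k+1)):ℕ)) = ρ (γ 0) := qγ_coe γ ρ 0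
  simp only [Fin.val_zero] at h0
  have : L + t * (dotk u w - c) ≤ dotk u v - Mv γ ρ v := by
    rw [hdot, hL]
    have := hM
    nlinarith [hM]
  linarith

lemma dotk_single {k : ℕ} (a : Fin k) (x : Fin k → ℝ) :
    dotk (fun l => if l = a then (1:ℝ) else 0) x = x a := by
  simp [dotk, ite_mul, Finset.sum_ite_eq']

lemma dotk_single' {k : ℕ} (a : Fin k) (x : Fin k → ℝ) :
    dotk x (fun l => if l = a then (1:ℝ) else 0) = x a := by
  rw [dotk_comm]; exact dotk_single a x

lemma dotk_sub {k : ℕ} (f g x : Fin k → ℝ) :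
    dotk (fun l => f l - g l) x = dotk f x - dotk g x := by
  simp [dotk, sub_mul, Finset.sum_sub_distrib]

lemma dotk_neg {k : ℕ} (f x : Fin k → ℝ) :
    dotk (fun l => - f l) x = - dotk f x := by
  simp [dotk]

lemma onevec_single {k : ℕ} (a : Fin k) (m : ℕ) :
    dotk (fun l => if l = a then (1:ℝ) else 0) (onevec k m)
      = if (a:ℕ) < m then 1 else 0 := by
  rw [dotk_single]; rfl

end BiconjAux

namespace BiconjAux

lemma biconj_le_aux {k : ℕ} (hk : 1 ≤ k) (γ : Fin (k+1) → ℝ) (ρ : ℝ → ℝ) (u : Fin k → ℝ)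
    (hIcc : ∀ i : Fin k, u i ∈ Set.Icc (0:ℝ) 1)
    (hmono : ∀ i j : Fin k, i ≤ j → u j ≤ u i)
    (v : Fin k → ℝ) :
    dotk u v - Mv γ ρ v ≤ ρ (γ 0) + dotk u (rvec γ ρ) := by
  set p : ℕ → ℝ := fun i => if i = 0 then 1 else vext u (i-1) with hp
  set s : ℕ → ℝ := fun i => (∑ j ∈ Finset.range i, vext v j) - qγ γ ρ i with hs
  have hvu0 : ∀ n, 0 ≤ vext u n := by
    intro n; unfold vext; split
    · exact (hIcc _).1
    · exact le_refl 0
  have hvu1 : ∀ n, vext u n ≤ 1 := by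
    intro n; unfold vext; split
    · exact (hIcc _).2
    · norm_num
  have hanti : ∀ m n : ℕ, m ≤ n → vext u n ≤ vext u m := by
    intro m n hmn
    by_cases hn : n < k
    · have hm : m < k := lt_of_le_of_lt hmn hn
      rw [vext, vext, dif_pos hn, dif_pos hm]
      exact hmono ⟨m, hm⟩ ⟨n, hn⟩ (by simpa [Fin.le_def] using hmn)
    · rw [show vext u n = 0 from dif_neg hn]
      exact hvu0 m
  have hpsucc : ∀ i : ℕ, p (i+1) = vext u i := by intro i; simp [hp]
  have hp0 : p 0 = 1 := by simp [hp]
  have hpk1 : p (k+1) = 0 := by rw [hpsucc, vext, dif_neg (lt_irrefl k)]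
  have hlam : ∀ i : ℕ, 0 ≤ p i - p (i+1) := by
    intro i
    rw [hpsucc]
    cases i with
    | zero => rw [hp0]; linarith [hvu1 0]
    | succ m => rw [hpsucc]; linarith [hanti m (m+1) (by omega)]
  have hsum1 : ∑ i ∈ Finset.range (k+1), (p i - p (i+1)) = 1 := by
    rw [Finset.sum_range_sub' p (k+1), hp0, hpk1]; ring
  have hfac : ∀ i ∈ Finset.range (k+1), s i ≤ Mv γ ρ v := by
    intro i hi
    rw [Finset.mem_range] at hi
    have hik : i ≤ k := by omega
    have h1 : s i = dotk v (onevec k ((⟨i, hi⟩ : Fin (k+1)) : ℕ)) - ρ (γ ⟨i, hi⟩) := by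
      rw [hs]
      simp only
      rw [dot_onevec v i hik, qγ, dif_pos hi]
    rw [h1]
    exact Finset.le_sup' (fun j : Fin (k+1) => dotk v (onevec k (j:ℕ)) - ρ (γ j))
      (Finset.mem_univ ⟨i, hi⟩)
  have hkey : ∑ i ∈ Finset.range (k+1), (p i - p (i+1)) * s i ≤ Mv γ ρ v := by
    calc ∑ i ∈ Finset.range (k+1), (p i - p (i+1)) * s i
        ≤ ∑ i ∈ Finset.range (k+1), (p i - p (i+1)) * Mv γ ρ v :=
          Finset.sum_le_sum fun i hi =>
            mul_le_mul_of_nonneg_left (hfac i hi) (hlam i)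
      _ = (∑ i ∈ Finset.range (k+1), (p i - p (i+1))) * Mv γ ρ v := by
          rw [Finset.sum_mul]
      _ = Mv γ ρ v := by rw [hsum1, one_mul]
  have habel := abel_sum p s (k+1)
  have hs0 : s 0 = - qγ γ ρ 0 := by simp [hs]
  have hT : ∑ i ∈ Finset.range (k+1), p (i+1) * (s (i+1) - s i)
      = dotk u v - dotk u (rvec γ ρ) := by
    rw [Finset.sum_range_succ, hpsucc, show vext u k = 0 from dif_neg (lt_irrefl k),
      zero_mul, add_zero]
    have hterm : ∀ i ∈ Finset.range k, p (i+1) * (s (i+1) - s i)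
        = vext u i * vext v i - vext u i * vext (rvec γ ρ) i := by
      intro i hi
      rw [Finset.mem_range] at hi
      rw [hpsucc, hs]
      simp only
      rw [Finset.sum_range_succ, vext_rvec γ ρ hi]
      ring
    rw [Finset.sum_congr rfl hterm, Finset.sum_sub_distrib,
      ← dotk_eq_range u v, ← dotk_eq_range u (rvec γ ρ)]
  have h0 : qγ γ ρ (((0:Fin (k+1)):ℕ)) = ρ (γ 0) := qγ_coe γ ρ 0
  simp only [Fin.val_zero] at h0
  rw [habel, hp0, hpk1, hs0, hT] at hkey
  linarith

end BiconjAux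

open BiconjAux

/-- Proposition 2. With `r_i = ρ(γ_{i+1}) - ρ(γ_i)`, the biconjugate of `σ`
equals `ρ(γ_1) + ⟨u, r⟩` whenever `1 ≥ u_1 ≥ … ≥ u_k ≥ 0` (i.e. all entries lie in `[0,1]`
and the entries are non-increasing), and equals `+∞` for every other `u ∈ ℝ^k`. -/
theorem biconj_sigma_eq {k : ℕ} (hk : 1 ≤ k) (γ : Fin (k+1) → ℝ) (hγ : StrictMono γ)
    (ρ : ℝ → ℝ) (u : Fin k → ℝ) :
    (((∀ i : Fin k, u i ∈ Set.Icc (0:ℝ) 1) ∧ ∀ i j : Fin k, i ≤ j → u j ≤ u i) →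
      conjV (conjV (sigmaF γ ρ)) u
        = ((ρ (γ 0) + dotk u (fun i => ρ (γ i.succ) - ρ (γ i.castSucc)) : ℝ) : EReal)) ∧
    ((¬ ((∀ i : Fin k, u i ∈ Set.Icc (0:ℝ) 1) ∧ ∀ i j : Fin k, i ≤ j → u j ≤ u i)) →
      conjV (conjV (sigmaF γ ρ)) u = ⊤) := by
  have hrv : (fun i : Fin k => ρ (γ i.succ) - ρ (γ i.castSucc)) = rvec γ ρ := rfl
  constructor
  · rintro ⟨hIcc, hmono⟩
    rw [hrv]
    apply le_antisymm
    · rw [biconj_eq]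
      apply iSup_le
      intro v
      rw [EReal.coe_le_coe_iff]
      exact biconj_le_aux hk γ ρ u hIcc hmono v
    · exact biconj_ge γ ρ u
  · intro h
    by_cases hpair : ∃ i j : Fin k, i < j ∧ u i < u j
    · obtain ⟨i, j, hij, hlt⟩ := hpair
      apply biconj_top γ ρ u (fun l => (if l = j then (1:ℝ) else 0) - (if l = i then 1 else 0)) 0
      · intro m
        rw [dotk_sub, onevec_single, onevec_single]
        have hij' : (i:ℕ) < (j:ℕ) := hij
        split_ifs <;> norm_num <;> omega
      · rw [dotk_comm, dotk_sub, dotk_single, dotk_single]; linarith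
    · have hmono : ∀ i j : Fin k, i ≤ j → u j ≤ u i := by
        intro i j hij
        rcases eq_or_lt_of_le hij with rfl | hlt
        · exact le_refl _
        · by_contra hc
          push_neg at hc
          exact hpair ⟨i, j, hlt, hc⟩
      have hIccFail : ∃ i : Fin k, ¬ (u i ∈ Set.Icc (0:ℝ) 1) := by
        by_contra hc
        push_neg at hc
        exact h ⟨fun i => hc i, hmono⟩
      obtain ⟨i, hi⟩ := hIccFail
      rw [Set.mem_Icc, not_and_or, not_le, not_le] at hi
      rcases hi with hneg | hbig
      · apply biconj_top γ ρ u (fun l => - (if l = i then (1:ℝ) else 0)) 0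
        · intro m
          rw [dotk_neg, onevec_single]
          split_ifs <;> norm_num
        · rw [dotk_comm, dotk_neg, dotk_single]; linarith
      · have h0i : u i ≤ u ⟨0, hk⟩ := hmono ⟨0, hk⟩ i (by simp [Fin.le_def])
        apply biconj_top γ ρ u (fun l => if l = ⟨0, hk⟩ then (1:ℝ) else 0) 1
        · intro m
          rw [onevec_single]
          split_ifs <;> norm_num
        · rw [dotk_comm, dotk_single]; linarith
end

section
/- Let γ_1 < γ_2 be real labels and let ρ : ℝ → ℝ. Define the lifted dataterm ρ_lift : ℝ → ℝ ∪ {+∞} by ρ_lift(u) = ρ(γ_1 + u·(γ_2 − γ_1)) for u ∈ [0,1] and ρ_lift(u) = +∞ otherwise. Then for every u ∈ ℝ, ρ_lift^{**}(u) = (ρ + δ_{[γ_1, γ_2]})^{**}( γ_1 + u·(γ_2 − γ_1) ), i.e. in the binary-label case the lifted biconjugate equals the convex envelope of ρ restricted to [γ_1, γ_2], composed with the affine reparametrization u ↦ γ_1 + u(γ_2 − γ_1). -/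
namespace EReal

noncomputable def subCoeOrderIso (r : ℝ) : EReal ≃o EReal :=
  Equiv.toOrderIso ⟨(· - r), (· + r), fun _ => sub_add_cancel, fun _ => add_sub_cancel_right⟩
    (fun _ _ h => sub_le_sub h le_rfl) (fun _ _ h => add_le_add_left h _)

lemma iSup_sub_coe {ι : Sort*} (f : ι → EReal) (r : ℝ) :
    (⨆ i, f i) - (r : EReal) = ⨆ i, f i - (r : EReal) :=
  (subCoeOrderIso r).map_iSup f

lemma coe_sub_right_comm (x s : ℝ) (y : EReal) :
    (x : EReal) - y - (s : EReal) = ((x - s : ℝ) : EReal) - y := by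
  induction y with
  | bot => rw [coe_sub_bot, top_sub_coe, coe_sub_bot]
  | coe y => norm_cast; ring
  | top => simp

lemma coe_sub_sub_coe (x s : ℝ) (y : EReal) :
    (x : EReal) - (y - (s : EReal)) = ((x + s : ℝ) : EReal) - y := by
  induction y with
  | bot => simp
  | coe y => norm_cast; ring
  | top => simp

end EReal

lemma conj1_comp_affine (f : ℝ → EReal) {a : ℝ} (ha : a ≠ 0) (b p : ℝ) :
    conj1 (fun w => f (b + w * a)) (a * p) = conj1 f p - ((p * b : ℝ) : EReal) := by
  rw [conj1, conj1, EReal.iSup_sub_coe]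
  conv_rhs => rw [← ((Equiv.mulRight₀ a ha).trans (Equiv.addLeft b)).iSup_comp]
  refine iSup_congr fun w => ?_
  simp only [Equiv.trans_apply, Equiv.mulRight₀_apply, Equiv.coe_addLeft]
  rw [EReal.coe_sub_right_comm]
  congr 2
  ring

theorem biconj_comp_affine (f : ℝ → EReal) {a : ℝ} (ha : a ≠ 0) (b u : ℝ) :
    conj1 (conj1 (fun w => f (b + w * a))) u = conj1 (conj1 f) (b + u * a) := by
  rw [conj1, conj1, ← (Equiv.mulLeft₀ a ha).iSup_comp]
  refine iSup_congr fun p => ?_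
  rw [Equiv.mulLeft₀_apply, conj1_comp_affine f ha, EReal.coe_sub_sub_coe]
  congr 2
  ring

lemma affine_mem_Icc_iff {γ1 γ2 : ℝ} (h : γ1 < γ2) (w : ℝ) :
    γ1 + w * (γ2 - γ1) ∈ Set.Icc γ1 γ2 ↔ w ∈ Set.Icc (0 : ℝ) 1 := by
  have hc : 0 < γ2 - γ1 := sub_pos.2 h
  simp only [Set.mem_Icc]
  constructor
  · rintro ⟨h1, h2⟩
    constructor <;> nlinarith
  · rintro ⟨h1, h2⟩
    constructor <;> nlinarith

lemma lift_eq_rhoRestr_comp_affine (ρ : ℝ → ℝ) {γ1 γ2 : ℝ} (h : γ1 < γ2) :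
    (fun w => if w ∈ Set.Icc (0:ℝ) 1 then (ρ (γ1 + w * (γ2 - γ1)) : EReal) else ⊤)
      = fun w => rhoRestr ρ γ1 γ2 (γ1 + w * (γ2 - γ1)) := by
  funext w
  simp only [rhoRestr, affine_mem_Icc_iff h]

/-- Proposition 3, binary label case. For `γ_1 < γ_2` and the lifted dataterm
`ρ_lift(u) = ρ(γ_1 + u (γ_2 - γ_1))` for `u ∈ [0,1]`, `+∞` otherwise, one has
`ρ_lift^{**}(u) = (ρ + δ_{[γ_1,γ_2]})^{**}(γ_1 + u (γ_2 - γ_1))` for every `u ∈ ℝ`. -/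
theorem biconj_binary_lift (γ1 γ2 : ℝ) (h : γ1 < γ2) (ρ : ℝ → ℝ) (u : ℝ) :
    conj1 (conj1 (fun w =>
        if w ∈ Set.Icc (0:ℝ) 1 then (ρ (γ1 + w * (γ2 - γ1)) : EReal) else ⊤)) u
      = conj1 (conj1 (rhoRestr ρ γ1 γ2)) (γ1 + u * (γ2 - γ1)) := by
  rw [lift_eq_rhoRestr_comp_affine ρ h]
  exact biconj_comp_affine _ (sub_pos.2 h).ne' γ1 u
end

section
/- Let k ≥ 1, d ≥ 1, and let γ_1 < γ_2 < … < γ_{k+1} be real labels. For fixed indices 1 ≤ j ≤ i ≤ k, the convex conjugate of Φ_{i,j} with respect to the Frobenius inner product on ℝ^{k×d} satisfies: Φ_{i,j}^*(q) = 0 if ‖q^T(1_i^α − 1_j^β)‖_2 ≤ |γ_i^α − γ_j^β| for all α, β ∈ [0,1], and Φ_{i,j}^*(q) = +∞ otherwise. -/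
/-- Frobenius inner product on ℝ^{k×d}. -/
noncomputable def pairM {k d : ℕ} (q g : Fin k → Fin d → ℝ) : ℝ := ∑ m, ∑ l, q m l * g m l

/-- Convex conjugate on ℝ^{k×d} w.r.t. the Frobenius inner product. -/
noncomputable def conjM {k d : ℕ} (f : (Fin k → Fin d → ℝ) → EReal)
    (q : Fin k → Fin d → ℝ) : EReal :=
  ⨆ g : Fin k → Fin d → ℝ, (pairM q g : EReal) - f g

/-- Euclidean norm on ℝ^d. -/
noncomputable def enorm2 {d : ℕ} (x : Fin d → ℝ) : ℝ := Real.sqrt (∑ l, x l ^ 2)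

/-- `q^T v ∈ ℝ^d` for `q ∈ ℝ^{k×d}`, `v ∈ ℝ^k`. -/
noncomputable def matT {k d : ℕ} (q : Fin k → Fin d → ℝ) (v : Fin k → ℝ) : Fin d → ℝ :=
  fun l => ∑ m, q m l * v m

/-- `Φ_{i,j}(g) = inf { |γ_i^α - γ_j^β| ‖ν‖₂ : α, β ∈ [0,1], ν ∈ ℝ^d, g = (1_i^α - 1_j^β) ν^T }`,
with the convention `inf ∅ = +∞` (in `EReal`, `sInf ∅ = ⊤`). -/
noncomputable def PhiIJ {k d : ℕ} (γ : Fin (k+1) → ℝ) (i j : Fin k)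
    (g : Fin k → Fin d → ℝ) : EReal :=
  sInf {c : EReal | ∃ α ∈ Set.Icc (0:ℝ) 1, ∃ β ∈ Set.Icc (0:ℝ) 1, ∃ ν : Fin d → ℝ,
    g = (fun m l => (liftvec i α m - liftvec j β m) * ν l) ∧
    c = ((|gammaAff γ i α - gammaAff γ j β| * enorm2 ν : ℝ) : EReal)}

lemma ereal_sub_self_nonpos (x : EReal) : x - x ≤ 0 := by
  induction x using EReal.rec <;> first | simp | (rw [← EReal.coe_sub]; simp)

lemma cs {d : ℕ} (ν w : Fin d → ℝ) :
    ∑ l, w l * ν l ≤ Real.sqrt (∑ l, w l ^ 2) * Real.sqrt (∑ l, ν l ^ 2) := by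
  calc ∑ l, w l * ν l ≤ |∑ l, w l * ν l| := le_abs_self _
    _ = Real.sqrt ((∑ l, w l * ν l) ^ 2) := (Real.sqrt_sq_eq_abs _).symm
    _ ≤ Real.sqrt ((∑ l, w l ^ 2) * ∑ l, ν l ^ 2) :=
        Real.sqrt_le_sqrt (Finset.sum_mul_sq_le_sq_mul_sq _ _ _)
    _ = _ := Real.sqrt_mul (by positivity) _

lemma pair_rank_one {k d : ℕ} (q : Fin k → Fin d → ℝ) (u : Fin k → ℝ) (ν : Fin d → ℝ) :
    pairM q (fun m l => u m * ν l) = ∑ l, matT q u l * ν l := by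
  unfold pairM matT
  rw [Finset.sum_comm]
  refine Finset.sum_congr rfl fun l _ => ?_
  rw [Finset.sum_mul]
  exact Finset.sum_congr rfl fun m _ => by ring

/-- Proposition 4, conjugate of a single piece. For `1 ≤ j ≤ i ≤ k`,
`Φ_{i,j}^*(q) = 0` if `‖q^T (1_i^α - 1_j^β)‖₂ ≤ |γ_i^α - γ_j^β|` for all `α, β ∈ [0,1]`,
and `Φ_{i,j}^*(q) = +∞` otherwise. -/
theorem conj_PhiIJ_eq {k d : ℕ} (hk : 1 ≤ k) (hd : 1 ≤ d) (γ : Fin (k+1) → ℝ)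
    (hγ : StrictMono γ) (i j : Fin k) (hji : j ≤ i) (q : Fin k → Fin d → ℝ) :
    ((∀ α ∈ Set.Icc (0:ℝ) 1, ∀ β ∈ Set.Icc (0:ℝ) 1,
        enorm2 (matT q (liftvec i α - liftvec j β)) ≤ |gammaAff γ i α - gammaAff γ j β|) →
      conjM (PhiIJ γ i j) q = 0) ∧
    ((¬ ∀ α ∈ Set.Icc (0:ℝ) 1, ∀ β ∈ Set.Icc (0:ℝ) 1,
        enorm2 (matT q (liftvec i α - liftvec j β)) ≤ |gammaAff γ i α - gammaAff γ j β|) →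
      conjM (PhiIJ γ i j) q = ⊤) := by
  constructor
  · intro h
    apply le_antisymm
    · apply iSup_le
      intro g
      have hle : (pairM q g : EReal) ≤ PhiIJ γ i j g := by
        apply le_sInf
        rintro c ⟨α, hα, β, hβ, ν, rfl, rfl⟩
        rw [EReal.coe_le_coe_iff]
        have hwe : matT q (liftvec i α - liftvec j β)
            = matT q (fun m => liftvec i α m - liftvec j β m) := rfl
        calc pairM q (fun m l => (liftvec i α m - liftvec j β m) * ν l)
            = ∑ l, matT q (fun m => liftvec i α m - liftvec j β m) l * ν l :=
              pair_rank_one q _ ν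
          _ ≤ enorm2 (matT q (fun m => liftvec i α m - liftvec j β m)) * enorm2 ν := cs ν _
          _ ≤ |gammaAff γ i α - gammaAff γ j β| * enorm2 ν := by
              refine mul_le_mul_of_nonneg_right ?_ (Real.sqrt_nonneg _)
              rw [← hwe]; exact h α hα β hβ
      calc (pairM q g : EReal) - PhiIJ γ i j g
          ≤ PhiIJ γ i j g - PhiIJ γ i j g := EReal.sub_le_sub hle le_rfl
        _ ≤ 0 := ereal_sub_self_nonpos _
    · have h0 : PhiIJ γ i j (0 : Fin k → Fin d → ℝ) = 0 := by
        apply le_antisymm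
        · refine sInf_le ⟨0, by norm_num, 0, by norm_num, 0, ?_, ?_⟩
          · funext m l; simp
          · simp [enorm2]
        · apply le_sInf
          rintro c ⟨α, hα, β, hβ, ν, -, rfl⟩
          have h1 : (0:ℝ) ≤ |gammaAff γ i α - gammaAff γ j β| * enorm2 ν :=
            mul_nonneg (abs_nonneg _) (Real.sqrt_nonneg _)
          exact_mod_cast h1
      refine le_trans ?_ (le_iSup _ (0 : Fin k → Fin d → ℝ))
      rw [h0]
      simp [pairM]
  · intro h
    push_neg at h
    obtain ⟨α, hα, β, hβ, hlt⟩ := h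
    have hwe : matT q (liftvec i α - liftvec j β)
        = matT q (fun m => liftvec i α m - liftvec j β m) := rfl
    set w : Fin d → ℝ := matT q (fun m => liftvec i α m - liftvec j β m) with hwdef
    set D : ℝ := |gammaAff γ i α - gammaAff γ j β| with hDdef
    set N : ℝ := enorm2 w with hNdef
    rw [hwe] at hlt
    have hD0 : 0 ≤ D := abs_nonneg _
    have hNpos : 0 < N := lt_of_le_of_lt hD0 hlt
    have hND : 0 < N * (N - D) := mul_pos hNpos (by linarith)
    rw [EReal.eq_top_iff_forall_lt]
    intro y
    set t : ℝ := (max y 0 + 1) / (N * (N - D)) with htdef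
    have ht0 : 0 < t := div_pos (by positivity) hND
    have hty : y < t * (N * (N - D)) := by
      rw [htdef, div_mul_cancel₀ _ (ne_of_gt hND)]
      have := le_max_left y 0; linarith
    set ν : Fin d → ℝ := fun l => t * w l with hνdef
    have hN2 : ∑ l, w l ^ 2 = N * N := by
      rw [hNdef]; unfold enorm2
      rw [Real.mul_self_sqrt (by positivity)]
    have hνnorm : enorm2 ν = t * N := by
      unfold enorm2
      have : ∑ l, ν l ^ 2 = t ^ 2 * ∑ l, w l ^ 2 := by
        rw [Finset.mul_sum]; exact Finset.sum_congr rfl fun l _ => by rw [hνdef]; ring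
      rw [this, Real.sqrt_mul (sq_nonneg t), Real.sqrt_sq ht0.le]
      rw [hNdef]; rfl
    have hpair : pairM q (fun m l => (liftvec i α m - liftvec j β m) * ν l)
        = t * (N * N) := by
      rw [pair_rank_one q _ ν, ← hwdef, ← hN2, Finset.mul_sum]
      exact Finset.sum_congr rfl fun l _ => by rw [hνdef]; ring
    have hPhi : PhiIJ γ i j (fun m l => (liftvec i α m - liftvec j β m) * ν l)
        ≤ ((D * enorm2 ν : ℝ) : EReal) :=
      sInf_le ⟨α, hα, β, hβ, ν, rfl, by rw [hDdef]⟩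
    refine lt_of_lt_of_le ?_
      (le_iSup (fun g => (pairM q g : EReal) - PhiIJ γ i j g)
        (fun m l => (liftvec i α m - liftvec j β m) * ν l))
    have hsub : ((pairM q (fun m l => (liftvec i α m - liftvec j β m) * ν l) : ℝ) : EReal)
        - ((D * enorm2 ν : ℝ) : EReal)
        ≤ (pairM q (fun m l => (liftvec i α m - liftvec j β m) * ν l) : EReal)
          - PhiIJ γ i j (fun m l => (liftvec i α m - liftvec j β m) * ν l) :=
      EReal.sub_le_sub le_rfl hPhi
    refine lt_of_lt_of_le ?_ hsub
    rw [← EReal.coe_sub, EReal.coe_lt_coe_iff, hpair, hνnorm]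
    nlinarith [hty]
end

section
/- Let k ≥ 1, d ≥ 1, and let γ_1 < γ_2 < … < γ_{k+1} be strictly increasing real labels. Then the constraint set K = { q ∈ ℝ^{k×d} : ‖q^T(1_i^α − 1_j^β)‖_2 ≤ |γ_i^α − γ_j^β| for all 1 ≤ j ≤ i ≤ k and all α, β ∈ [0,1] } equals the set { q ∈ ℝ^{k×d} : ‖q_i‖_2 ≤ γ_{i+1} − γ_i for all 1 ≤ i ≤ k }, where q_i ∈ ℝ^d denotes the i-th row of q. In particular, the infinitely many constraints defining K reduce to k norm constraints. -/
/-!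
Write `Δ m = γ (m+1) - γ m`. The labels are a telescoping sum along `1_i^α`:
`γ_i^α - γ_0 = ∑ m, (1_i^α)_m Δ m`. For `j ≤ i` the vector `v = 1_i^α - 1_j^β` has entries of
one sign, so the triangle inequality `‖qᵀ v‖ ≤ ∑ |v_m| ‖q_m‖ ≤ ∑ |v_m| Δ m = |γ_i^α - γ_j^β|`
shows that the row bounds imply all constraints. Conversely, the constraint for `i = j`,
`α = 1`, `β = 0` is exactly the bound on the row `q_i`, since `1_i^1 - 1_i^0` is the `i`-th unit
vector.
-/

open Finset

lemma enorm2_eq_norm {d : ℕ} (x : Fin d → ℝ) : enorm2 x = ‖WithLp.toLp 2 x‖ := by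
  simp [enorm2, EuclideanSpace.norm_eq]

lemma matT_eq_sum_smul {k d : ℕ} (q : Fin k → Fin d → ℝ) (v : Fin k → ℝ) :
    matT q v = ∑ m, v m • q m := by
  ext l
  simp [matT, mul_comm]

lemma enorm2_matT_le {k d : ℕ} (q : Fin k → Fin d → ℝ) (v : Fin k → ℝ) :
    enorm2 (matT q v) ≤ ∑ m, |v m| * enorm2 (q m) := by
  simp only [enorm2_eq_norm, matT_eq_sum_smul, WithLp.toLp_sum, WithLp.toLp_smul]
  refine (norm_sum_le _ _).trans_eq ?_
  simp [norm_smul]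

lemma enorm2_matT_sub_comm {k d : ℕ} (q : Fin k → Fin d → ℝ) (v w : Fin k → ℝ) :
    enorm2 (matT q (v - w)) = enorm2 (matT q (w - v)) := by
  rw [enorm2_eq_norm, enorm2_eq_norm, ← norm_neg, ← WithLp.toLp_neg]
  congr 2
  ext l
  simp [matT, mul_sub]

open Fin.NatCast in
lemma sum_liftvec_mul_sub {k : ℕ} (γ : Fin (k+1) → ℝ) (i : Fin k) (α : ℝ) :
    ∑ m, liftvec i α m * (γ m.succ - γ m.castSucc) = gammaAff γ i α - γ 0 := by
  -- the cast `ℕ → Fin (k + 1)` wraps around, but `g` is only evaluated at `n ≤ k`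
  set g : ℕ → ℝ := fun n => γ (n : Fin (k + 1))
  set c : ℕ → ℝ := fun n => if n < i then 1 else if n = i then α else 0
  calc ∑ m, liftvec i α m * (γ m.succ - γ m.castSucc)
      = ∑ n ∈ range k, c n * (g (n + 1) - g n) := by
        rw [← Fin.sum_univ_eq_sum_range (fun n => c n * (g (n + 1) - g n))]
        simp [c, g, liftvec, Fin.ext_iff]
    _ = ∑ n ∈ range (i + 1), c n * (g (n + 1) - g n) := by
        rw [← sum_range_add_sum_Ico _ i.isLt, add_eq_left]
        refine sum_eq_zero fun n hn => ?_
        have hin : i < n := (mem_Ico.1 hn).1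
        simp [c, hin.not_gt, hin.ne']
    _ = ∑ n ∈ range i, (g (n + 1) - g n) + α * (g (i + 1) - g i) := by
        rw [sum_range_succ]
        congr 1
        · exact sum_congr rfl fun n hn => by simp [c, mem_range.1 hn]
        · simp [c]
    _ = gammaAff γ i α - γ 0 := by
        rw [sum_range_sub]
        simp [g, gammaAff]
        ring

lemma liftvec_le_liftvec {k : ℕ} {i j : Fin k} {α β : ℝ} (hα : 0 ≤ α) (hβ : β ≤ 1)
    (h : j < i ∨ j = i ∧ β ≤ α) : liftvec j β ≤ liftvec i α := by
  intro m
  rcases h with h | ⟨rfl, h⟩ <;> simp only [liftvec, Fin.lt_def, Fin.ext_iff] at h ⊢ <;>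
    split_ifs <;> linarith

lemma liftvec_one_sub_liftvec_zero {k : ℕ} (i : Fin k) :
    liftvec i 1 - liftvec i 0 = Pi.single i 1 := by
  ext m
  simp only [Pi.sub_apply, liftvec, Pi.single_apply]
  split_ifs with hlt heq <;> simp_all

lemma matT_single {k d : ℕ} (q : Fin k → Fin d → ℝ) (i : Fin k) :
    matT q (Pi.single i 1) = q i := by
  simp [matT_eq_sum_smul, Pi.single_apply]

lemma enorm2_matT_liftvec_sub_le {k d : ℕ} {γ : Fin (k+1) → ℝ} {q : Fin k → Fin d → ℝ}
    (hq : ∀ m, enorm2 (q m) ≤ γ m.succ - γ m.castSucc) {i j : Fin k} {α β : ℝ}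
    (hle : liftvec j β ≤ liftvec i α) :
    enorm2 (matT q (liftvec i α - liftvec j β)) ≤ gammaAff γ i α - gammaAff γ j β := by
  have hv : ∀ m, 0 ≤ (liftvec i α - liftvec j β) m := fun m => sub_nonneg.2 (hle m)
  calc enorm2 (matT q (liftvec i α - liftvec j β))
      ≤ ∑ m, |(liftvec i α - liftvec j β) m| * enorm2 (q m) := enorm2_matT_le q _
    _ ≤ ∑ m, (liftvec i α - liftvec j β) m * (γ m.succ - γ m.castSucc) := by
      simp only [abs_of_nonneg (hv _)]
      gcongr with m
      exacts [hv m, hq m]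
    _ = gammaAff γ i α - gammaAff γ j β := by
      simp only [Pi.sub_apply, sub_mul, sum_sub_distrib, sum_liftvec_mul_sub]
      ring

theorem constraint_set_reduction_general {k d : ℕ} (γ : Fin (k+1) → ℝ)
    (hγ : StrictMono γ) :
    {q : Fin k → Fin d → ℝ | ∀ i j : Fin k, j ≤ i →
        ∀ α ∈ Set.Icc (0:ℝ) 1, ∀ β ∈ Set.Icc (0:ℝ) 1,
          enorm2 (matT q (liftvec i α - liftvec j β)) ≤ |gammaAff γ i α - gammaAff γ j β|}
      = {q : Fin k → Fin d → ℝ | ∀ i : Fin k, enorm2 (q i) ≤ γ i.succ - γ i.castSucc} := by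
  ext q
  constructor
  · intro hK i
    have hΔ : 0 ≤ γ i.succ - γ i.castSucc := sub_nonneg.2 (hγ.monotone Fin.castSucc_lt_succ.le)
    simpa [liftvec_one_sub_liftvec_zero, matT_single, gammaAff, abs_of_nonneg hΔ] using
      hK i i le_rfl 1 ⟨zero_le_one, le_rfl⟩ 0 ⟨le_rfl, zero_le_one⟩
  · rintro hq i j hji α ⟨hα₀, hα₁⟩ β ⟨hβ₀, hβ₁⟩
    have bound : ∀ {i' j' : Fin k} {α' β' : ℝ}, liftvec j' β' ≤ liftvec i' α' →
        enorm2 (matT q (liftvec i' α' - liftvec j' β')) ≤ |gammaAff γ i' α' - gammaAff γ j' β'| :=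
      fun hle => (enorm2_matT_liftvec_sub_le hq hle).trans (le_abs_self _)
    rcases hji.lt_or_eq with hlt | rfl
    · exact bound (liftvec_le_liftvec hα₀ hβ₁ (.inl hlt))
    rcases le_total β α with hβα | hαβ
    · exact bound (liftvec_le_liftvec hα₀ hβ₁ (.inr ⟨rfl, hβα⟩))
    · rw [enorm2_matT_sub_comm, abs_sub_comm]
      exact bound (liftvec_le_liftvec hβ₀ hα₁ (.inr ⟨rfl, hαβ⟩))

/-- Proposition 5. For strictly increasing labels, the constraint set
`K = { q : ‖q^T (1_i^α - 1_j^β)‖₂ ≤ |γ_i^α - γ_j^β|, ∀ 1 ≤ j ≤ i ≤ k, ∀ α, β ∈ [0,1] }`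
equals `{ q : ‖q_i‖₂ ≤ γ_{i+1} - γ_i, ∀ 1 ≤ i ≤ k }`, where `q i` is the `i`-th row of `q`. -/
theorem constraint_set_reduction {k d : ℕ} (hk : 1 ≤ k) (hd : 1 ≤ d) (γ : Fin (k+1) → ℝ)
    (hγ : StrictMono γ) :
    {q : Fin k → Fin d → ℝ | ∀ i j : Fin k, j ≤ i →
        ∀ α ∈ Set.Icc (0:ℝ) 1, ∀ β ∈ Set.Icc (0:ℝ) 1,
          enorm2 (matT q (liftvec i α - liftvec j β)) ≤ |gammaAff γ i α - gammaAff γ j β|}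
      = {q : Fin k → Fin d → ℝ | ∀ i : Fin k, enorm2 (q i) ≤ γ i.succ - γ i.castSucc} :=
  constraint_set_reduction_general γ hγ
end

section
/- Let k ≥ 1, d ≥ 1, let γ_1 < γ_2 < … < γ_{k+1} be strictly increasing real numbers, and let q_1, …, q_k ∈ ℝ^d satisfy ‖Σ_{l=j}^{i} q_l‖_2 ≤ γ_{i+1} − γ_j for all 1 ≤ j ≤ i ≤ k. Then for all 1 ≤ j ≤ i ≤ k and all α, β ∈ [0,1], ‖Σ_{l=j}^{i−1} q_l + α·q_i − β·q_j‖_2 ≤ |γ_i^α − γ_j^β|, where the sum Σ_{l=j}^{i−1} q_l is empty (equal to 0) when j = i, and γ_i^α := γ_i + α(γ_{i+1} − γ_i), γ_j^β := γ_j + β(γ_{j+1} − γ_j). -/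
/-!
With the partial sums `P` of `q` (`P 0 = 0`, `P (m + 1) = P m + q m`) the hypothesis reads
`‖P b - P a‖ ≤ γ b - γ a` for `a ≤ b`, and the claim compares a point of the segment
`[P i, P (i+1)]` with a point of `[P j, P (j+1)]`, taken at the same parameters as the points
`γ_i^α`, `γ_j^β`. For `j < i` their difference is a convex combination (with bilinear weights in
`α`, `β`) of the four differences `P b - P a` between endpoints, all with `a ≤ b`, so the
triangle inequality gives the bound. For `j = i` the difference is `(α - β) • q i`.
-/

open AffineMap Finset

section Interpolation

variable {E : Type*} [SeminormedAddCommGroup E] [NormedSpace ℝ E]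

theorem norm_lineMap_le_lineMap {u v : E} {a b t : ℝ} (hu : ‖u‖ ≤ a) (hv : ‖v‖ ≤ b)
    (ht : t ∈ Set.Icc (0 : ℝ) 1) : ‖lineMap u v t‖ ≤ lineMap a b t := by
  obtain ⟨ht₀, ht₁⟩ := ht
  calc ‖lineMap u v t‖ ≤ (1 - t) * ‖u‖ + t * ‖v‖ := by
        rw [lineMap_apply_module]
        refine (norm_add_le _ _).trans_eq ?_
        rw [norm_smul_of_nonneg (by linarith), norm_smul_of_nonneg ht₀]
    _ ≤ lineMap a b t := by
        rw [lineMap_apply_ring]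
        gcongr

theorem norm_lineMap_sub_lineMap_le {x₀ x₁ y₀ y₁ : E} {a₀ a₁ b₀ b₁ s t : ℝ}
    (h₀₀ : ‖x₀ - y₀‖ ≤ a₀ - b₀) (h₀₁ : ‖x₀ - y₁‖ ≤ a₀ - b₁)
    (h₁₀ : ‖x₁ - y₀‖ ≤ a₁ - b₀) (h₁₁ : ‖x₁ - y₁‖ ≤ a₁ - b₁)
    (hs : s ∈ Set.Icc (0 : ℝ) 1) (ht : t ∈ Set.Icc (0 : ℝ) 1) :
    ‖lineMap x₀ x₁ s - lineMap y₀ y₁ t‖ ≤ lineMap a₀ a₁ s - lineMap b₀ b₁ t := by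
  have sub_lineMap {x : E} {a : ℝ} (h₀ : ‖x - y₀‖ ≤ a - b₀) (h₁ : ‖x - y₁‖ ≤ a - b₁) :
      ‖x - lineMap y₀ y₁ t‖ ≤ a - lineMap b₀ b₁ t := by
    have := norm_lineMap_le_lineMap h₀ h₁ ht
    simp only [lineMap_apply_module] at this ⊢
    convert this using 2 <;> module
  have := norm_lineMap_le_lineMap (sub_lineMap h₀₀ h₀₁) (sub_lineMap h₁₀ h₁₁) hs
  simp only [lineMap_apply_module] at this ⊢
  convert this using 2 <;> module

theorem norm_lineMap_sub_lineMap_same_le {x₀ x₁ : E} {a₀ a₁ : ℝ} (h : ‖x₁ - x₀‖ ≤ a₁ - a₀)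
    (s t : ℝ) : ‖lineMap x₀ x₁ s - lineMap x₀ x₁ t‖ ≤ |lineMap a₀ a₁ s - lineMap a₀ a₁ t| := by
  have hx : lineMap x₀ x₁ s - lineMap x₀ x₁ t = (s - t) • (x₁ - x₀) := by
    simp only [lineMap_apply_module']; module
  have ha : lineMap a₀ a₁ s - lineMap a₀ a₁ t = (s - t) * (a₁ - a₀) := by
    simp only [lineMap_apply_ring']; ring
  rw [hx, ha, norm_smul, Real.norm_eq_abs, abs_mul, abs_of_nonneg ((norm_nonneg _).trans h)]
  gcongr

theorem norm_lineMap_segment_sub_le {n : ℕ} {P : Fin (n + 1) → E} {γ : Fin (n + 1) → ℝ}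
    (hP : ∀ a b, a ≤ b → ‖P b - P a‖ ≤ γ b - γ a)
    {j i : Fin n} (hji : j ≤ i) {s t : ℝ} (hs : s ∈ Set.Icc (0 : ℝ) 1)
    (ht : t ∈ Set.Icc (0 : ℝ) 1) :
    ‖lineMap (P i.castSucc) (P i.succ) s - lineMap (P j.castSucc) (P j.succ) t‖
      ≤ |lineMap (γ i.castSucc) (γ i.succ) s - lineMap (γ j.castSucc) (γ j.succ) t| := by
  rcases hji.eq_or_lt with rfl | hlt
  · exact norm_lineMap_sub_lineMap_same_le (hP _ _ j.castSucc_le_succ) s t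
  · refine (norm_lineMap_sub_lineMap_le (hP _ _ ?_) (hP _ _ ?_) (hP _ _ ?_) (hP _ _ ?_)
      hs ht).trans (le_abs_self _)
    · simpa using hlt.le
    · simpa using hlt
    · exact (Fin.castSucc_lt_succ_iff.2 hlt.le).le
    · simpa using hlt.le

end Interpolation

section PartialSum

variable {E : Type*} [AddCommGroup E] {n : ℕ} (q : Fin n → E)

theorem Fin.partialSum_succ_sub_castSucc {j i : Fin n} (hji : j ≤ i) :
    Fin.partialSum q i.succ - Fin.partialSum q j.castSucc = ∑ l ∈ Icc j i, q l := by
  rw [← Fin.sum_Icc_sub hji]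
  simp [Fin.partialSum_succ]

theorem Fin.partialSum_castSucc_sub_castSucc {j i : Fin n} (hji : j ≤ i) :
    Fin.partialSum q i.castSucc - Fin.partialSum q j.castSucc = ∑ l ∈ Ico j i, q l := by
  rw [← add_left_inj (q i), sum_Ico_add_eq_sum_Icc hji, ← Fin.partialSum_succ_sub_castSucc q hji,
    Fin.partialSum_succ]
  abel

end PartialSum

theorem norm_partialSum_sub_le {E : Type*} [SeminormedAddCommGroup E] {n : ℕ} {q : Fin n → E}
    {γ : Fin (n + 1) → ℝ}
    (h : ∀ j i : Fin n, j ≤ i → ‖∑ l ∈ Icc j i, q l‖ ≤ γ i.succ - γ j.castSucc)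
    (a b : Fin (n + 1)) (hab : a ≤ b) :
    ‖Fin.partialSum q b - Fin.partialSum q a‖ ≤ γ b - γ a := by
  rcases hab.eq_or_lt with rfl | hlt
  · simp
  have ha : a ≠ Fin.last n := (hlt.trans_le (Fin.le_last b)).ne
  have hb : b ≠ 0 := (hlt.trans_le' (Fin.zero_le a)).ne'
  have hji : a.castPred ha ≤ b.pred hb := by
    rw [Fin.le_def]; simp only [Fin.coe_castPred, Fin.val_pred]; omega
  rw [← Fin.castSucc_castPred a ha, ← Fin.succ_pred b hb,
    Fin.partialSum_succ_sub_castSucc q hji]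
  exact h _ _ hji

theorem sublabel_norm_le_general {k d : ℕ} (γ : Fin (k+1) → ℝ)
    (q : Fin k → EuclideanSpace ℝ (Fin d))
    (h : ∀ j i : Fin k, j ≤ i → ‖∑ l ∈ Finset.Icc j i, q l‖ ≤ γ i.succ - γ j.castSucc) :
    ∀ j i : Fin k, j ≤ i → ∀ α ∈ Set.Icc (0:ℝ) 1, ∀ β ∈ Set.Icc (0:ℝ) 1,
      ‖(∑ l ∈ Finset.Ico j i, q l) + α • q i - β • q j‖
        ≤ |(γ i.castSucc + α * (γ i.succ - γ i.castSucc))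
            - (γ j.castSucc + β * (γ j.succ - γ j.castSucc))| := by
  intro j i hji α hα β hβ
  have hq (l : Fin k) : q l = Fin.partialSum q l.succ - Fin.partialSum q l.castSucc := by
    simp [Fin.partialSum_succ]
  have key := norm_lineMap_segment_sub_le (norm_partialSum_sub_le h) hji hα hβ
  rw [← Fin.partialSum_castSucc_sub_castSucc q hji, hq i, hq j]
  simp only [lineMap_apply_module', smul_eq_mul] at key
  refine (congrArg (‖·‖) ?_).trans_le (key.trans_eq (congrArg abs ?_))
  · module
  · ring

/-- part of the proof of Proposition 5. If
`‖Σ_{l=j}^{i} q_l‖₂ ≤ γ_{i+1} - γ_j` for all `j ≤ i`, then for all `j ≤ i` and all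
`α, β ∈ [0,1]`, `‖Σ_{l=j}^{i-1} q_l + α q_i - β q_j‖₂ ≤ |γ_i^α - γ_j^β|`, where
`γ_i^α = γ_i + α (γ_{i+1} - γ_i)` (the sum is empty when `j = i`). -/
theorem sublabel_norm_le {k d : ℕ} (hk : 1 ≤ k) (hd : 1 ≤ d) (γ : Fin (k+1) → ℝ)
    (hγ : StrictMono γ) (q : Fin k → EuclideanSpace ℝ (Fin d))
    (h : ∀ j i : Fin k, j ≤ i → ‖∑ l ∈ Finset.Icc j i, q l‖ ≤ γ i.succ - γ j.castSucc) :
    ∀ j i : Fin k, j ≤ i → ∀ α ∈ Set.Icc (0:ℝ) 1, ∀ β ∈ Set.Icc (0:ℝ) 1,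
      ‖(∑ l ∈ Finset.Ico j i, q l) + α • q i - β • q j‖
        ≤ |(γ i.castSucc + α * (γ i.succ - γ i.castSucc))
            - (γ j.castSucc + β * (γ j.succ - γ j.castSucc))| :=
  sublabel_norm_le_general γ q h
end

section
/- Let k ≥ 1, let c ∈ ℝ, and let μ ∈ ℝ^k. Then the supremum over p ∈ ℝ^k of Σ_{i=1}^k μ_i p_i − max_{1 ≤ i ≤ k} max(p_i, −c) equals (1 − Σ_{i=1}^k μ_i)·c if μ_i ≥ 0 for all i and Σ_{i=1}^k μ_i ≤ 1, and equals +∞ otherwise (i.e. if some μ_i < 0 or Σ_{i=1}^k μ_i > 1). -/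
/-- auxiliary supremum computation in the proof of Proposition 2.
For `c ∈ ℝ` and `μ ∈ ℝ^k`, the supremum (in the extended reals) over `p ∈ ℝ^k` of
`Σ_i μ_i p_i - max_i max(p_i, -c)` equals `(1 - Σ_i μ_i)·c` if `μ_i ≥ 0` for all `i` and
`Σ_i μ_i ≤ 1`, and equals `+∞` otherwise. -/
theorem sup_linear_minus_max {k : ℕ} (hk : 1 ≤ k) (c : ℝ) (μ : Fin k → ℝ) :
    (((∀ i, 0 ≤ μ i) ∧ ∑ i, μ i ≤ 1) →
      (⨆ p : Fin k → ℝ, (((∑ i, μ i * p i) - ⨆ i, max (p i) (-c) : ℝ) : EReal))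
        = (((1 - ∑ i, μ i) * c : ℝ) : EReal)) ∧
    ((¬ ((∀ i, 0 ≤ μ i) ∧ ∑ i, μ i ≤ 1)) →
      (⨆ p : Fin k → ℝ, (((∑ i, μ i * p i) - ⨆ i, max (p i) (-c) : ℝ) : EReal)) = ⊤) := by
  haveI : Nonempty (Fin k) := ⟨⟨0, hk⟩⟩
  have hMb : ∀ p : Fin k → ℝ, ∀ i, p i ≤ ⨆ i, max (p i) (-c) := fun p i =>
    (le_max_left _ _).trans (le_ciSup (f := fun i => max (p i) (-c)) (Set.finite_range _).bddAbove i)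
  have hMc : ∀ p : Fin k → ℝ, -c ≤ ⨆ i, max (p i) (-c) := fun p =>
    (le_max_right (p (Classical.arbitrary _)) _).trans
      (le_ciSup (f := fun i => max (p i) (-c)) (Set.finite_range _).bddAbove (Classical.arbitrary _))
  constructor
  · rintro ⟨hpos, hsum⟩
    apply le_antisymm
    · apply iSup_le
      intro p
      rw [EReal.coe_le_coe_iff]
      have h1 : ∑ i, μ i * p i ≤ (∑ i, μ i) * (⨆ i, max (p i) (-c)) := by
        rw [Finset.sum_mul]
        exact Finset.sum_le_sum fun i _ => mul_le_mul_of_nonneg_left (hMb p i) (hpos i)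
      nlinarith [hMc p]
    · have hle := le_iSup
        (fun p : Fin k → ℝ => (((∑ i, μ i * p i) - ⨆ i, max (p i) (-c) : ℝ) : EReal))
        (fun _ => -c)
      refine le_trans (le_of_eq ?_) hle
      have hM : (⨆ i : Fin k, max (-c) (-c)) = -c := by
        simp [ciSup_const]
      rw [EReal.coe_eq_coe_iff]
      rw [hM, ← Finset.sum_mul]
      ring
  · intro hnot
    rw [iSup_eq_top]
    intro b hb
    obtain ⟨r, hbr, -⟩ := EReal.exists_between_coe_real hb
    suffices h : ∃ p : Fin k → ℝ, r < (∑ i, μ i * p i) - ⨆ i, max (p i) (-c) by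
      obtain ⟨p, hp⟩ := h
      exact ⟨p, hbr.trans (EReal.coe_lt_coe_iff.mpr hp)⟩
    by_cases hneg : ∃ j, μ j < 0
    · obtain ⟨j, hj⟩ := hneg
      set A : ℝ := ∑ i ∈ Finset.univ.erase j, μ i with hA
      set t : ℝ := max c ((r - c + A * c + 1) / (-μ j)) with ht
      have htc : c ≤ t := le_max_left _ _
      refine ⟨fun i => if i = j then -t else -c, ?_⟩
      have hM : (⨆ i : Fin k, max ((if i = j then -t else -c)) (-c)) = -c := by
        have : ∀ i : Fin k, max ((if i = j then -t else -c)) (-c) = -c := by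
          intro i
          by_cases h : i = j <;> simp [h, max_eq_right, neg_le_neg htc]
        rw [iSup_congr this, ciSup_const]
      rw [hM]
      have hsum' : ∑ i, μ i * (if i = j then -t else -c)
          = A * (-c) + μ j * (-t) := by
        rw [← Finset.sum_erase_add Finset.univ _ (Finset.mem_univ j)]
        simp only [if_pos rfl]
        rw [hA, Finset.sum_mul]
        congr 1
        exact Finset.sum_congr rfl fun i hi => by
          rw [if_neg (Finset.ne_of_mem_erase hi)]
      rw [hsum']
      have hdiv := (div_le_iff₀ (by linarith : (0:ℝ) < -μ j)).mp
        (le_max_right c ((r - c + A * c + 1) / (-μ j)))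
      nlinarith
    · push_neg at hneg hnot
      have hS : 1 < ∑ i, μ i := hnot hneg
      set t : ℝ := max (-c) ((r + 1) / (∑ i, μ i - 1)) with ht
      refine ⟨fun _ => t, ?_⟩
      have hM : (⨆ i : Fin k, max t (-c)) = t := by
        rw [ciSup_const, max_eq_left (le_max_left _ _)]
      rw [hM, ← Finset.sum_mul]
      have hdiv := (div_le_iff₀ (by linarith : (0:ℝ) < ∑ i, μ i - 1)).mp
        (le_max_right (-c) ((r + 1) / (∑ i, μ i - 1)))
      nlinarith
end

section
/- Let k ≥ 1, let γ_1 < γ_2 < … < γ_{k+1} be real labels, and let ρ : ℝ → ℝ. Then the infimum of ρ over the interval [γ_1, γ_{k+1}] equals the infimum of the lifted dataterm ρ_lift over ℝ^k: inf_{t ∈ [γ_1, γ_{k+1}]} ρ(t) = inf_{u ∈ ℝ^k} ρ_lift(u), where ρ_lift(u) = min_{1≤i≤k} ρ_i(u). -/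
/-!
As `α` ranges over `[0, 1]`, `γ_i^α` sweeps out exactly `[γ_i, γ_{i+1}]`, so the infimum of `ρ_i`
over `ℝ^k` is the infimum of `ρ` on that interval; these intervals cover `[γ_1, γ_{k+1}]`.
-/

open Set

theorem Monotone.iUnion_Icc_castSucc_succ {α : Type*} [LinearOrder α] {k : ℕ} (hk : k ≠ 0)
    {γ : Fin (k + 1) → α} (hγ : Monotone γ) :
    ⋃ i : Fin k, Icc (γ i.castSucc) (γ i.succ) = Icc (γ 0) (γ (Fin.last k)) := by
  induction k with
  | zero => exact absurd rfl hk
  | succ k ih =>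
    rw [iUnion_fin_add_one_eq_iUnion_castSucc]
    rcases eq_or_ne k 0 with rfl | hk₀
    · simp
    · have hinit := ih hk₀ (hγ.comp Fin.strictMono_castSucc.monotone)
      simp only [Function.comp_def, Fin.succ_castSucc, Fin.castSucc_zero] at hinit ⊢
      rw [hinit]
      exact Icc_union_Icc_eq_Icc (hγ (Fin.zero_le _)) (hγ (Fin.last k).castSucc_le_succ)

theorem gammaAff_eq_lineMap {k : ℕ} (γ : Fin (k + 1) → ℝ) (i : Fin k) :
    gammaAff γ i = AffineMap.lineMap (γ i.castSucc) (γ i.succ) := by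
  ext α
  rw [AffineMap.lineMap_apply_ring', gammaAff, add_comm]

theorem gammaAff_image_Icc {k : ℕ} {γ : Fin (k + 1) → ℝ} (hγ : Monotone γ) (i : Fin k) :
    gammaAff γ i '' Icc 0 1 = Icc (γ i.castSucc) (γ i.succ) := by
  rw [gammaAff_eq_lineMap, ← segment_eq_image_lineMap, segment_eq_Icc (hγ i.castSucc_le_succ)]

theorem iInf_rhoPiece {k : ℕ} (γ : Fin (k + 1) → ℝ) (ρ : ℝ → ℝ) (i : Fin k) :
    ⨅ u, rhoPiece γ ρ i u = ⨅ α ∈ Icc (0 : ℝ) 1, (ρ (gammaAff γ i α) : EReal) := by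
  refine le_antisymm (le_iInf₂ fun α hα => ?_) (le_iInf fun u => le_sInf ?_)
  · exact iInf_le_of_le (liftvec i α) (sInf_le ⟨α, hα, rfl, rfl⟩)
  · rintro _ ⟨α, hα, -, rfl⟩
    exact biInf_le _ hα

/-- Minimizing `ρ` over `[γ_1, γ_{k+1}]` is equivalent to minimizing the
lifted dataterm `ρ_lift(u) = min_i ρ_i(u)` over `ℝ^k` (infima in the extended reals). -/
theorem inf_rho_eq_inf_lift {k : ℕ} (hk : 1 ≤ k) (γ : Fin (k+1) → ℝ) (hγ : StrictMono γ)
    (ρ : ℝ → ℝ) :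
    ⨅ t ∈ Set.Icc (γ 0) (γ (Fin.last k)), (ρ t : EReal)
      = ⨅ u : Fin k → ℝ, ⨅ i : Fin k, rhoPiece γ ρ i u := by
  rw [iInf_comm, ← hγ.monotone.iUnion_Icc_castSucc_succ (Nat.one_le_iff_ne_zero.1 hk), iInf_iUnion]
  refine iInf_congr fun i => ?_
  rw [iInf_rhoPiece, ← gammaAff_image_Icc hγ.monotone, iInf_image]
end
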